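/- Let m : ℝ → ℝ be smooth with m(0) = 0, let γ ∈ ℝ with γ ≠ 0, ε ∈ {1, −1}, and define b(y) = ε·(γ + m′(y)/γ) and c(y) = −γ + m′(y)/γ, so that B(y) = ε·(γ·y + m(y)/γ). Then for every smooth function q : ℝ → ℝ and every smooth function u : ℝ² → ℝ (not necessarily a solution), the identity exp(γx)·q(x − εt)·F[u] = ∂ₜ[ exp(γx)·( q(x − εt)·(∂ₜu + B(u)) + ε·q′(x − εt)·u ) ] + ∂ₓ[ exp(γx)·( (q′(x − εt) − γ·q(x − εt))·u − q(x − εt)·(∂ₓu − ε·B(u)) ) ] holds on ℝ². In particular, exp(γx)·q(x − εt) is a conservation law multiplier, and on every solution of F[u] = 0 the displayed current is divergence-free. -/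

import Mathlib

/-!
Both currents are differentiated by the product and chain rules, using that `B` has derivative
`b` because of its closed form `ε (γ y + m y / γ)`. What remains is an identity between
polynomials in the jets of `u` and `q`, `m (u)`, `m′ (u)` and `γ⁻¹`, which holds modulo `ε² = 1`.
-/

noncomputable section

open Real

/-- Partial derivative in the first (time) variable. -/
def Dt (u : ℝ → ℝ → ℝ) : ℝ → ℝ → ℝ := fun t x => deriv (fun s => u s x) t

/-- Partial derivative in the second (space) variable. -/
def Dx (u : ℝ → ℝ → ℝ) : ℝ → ℝ → ℝ := fun t x => deriv (fun s => u t s) x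

/-- Smoothness (C^∞) of a function of two real variables. -/
def Smooth2 (u : ℝ → ℝ → ℝ) : Prop := ContDiff ℝ (⊤ : ℕ∞) (fun p : ℝ × ℝ => u p.1 p.2)
/-- The semilinear wave operator F[u] = ∂ₜ²u − ∂ₓ²u + b(u)∂ₜu + c(u)∂ₓu + m(u). -/
def Fop (b c m : ℝ → ℝ) (u : ℝ → ℝ → ℝ) : ℝ → ℝ → ℝ := fun t x =>
  Dt (Dt u) t x - Dx (Dx u) t x + b (u t x) * Dt u t x + c (u t x) * Dx u t x + m (u t x)

/-- The adjoint linearized operator along u: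
L*[u]q = ∂ₜ²q − ∂ₓ²q − b(u)∂ₜq − c(u)∂ₓq + m′(u)q. -/
def Lstar (b c m : ℝ → ℝ) (u q : ℝ → ℝ → ℝ) : ℝ → ℝ → ℝ := fun t x =>
  Dt (Dt q) t x - Dx (Dx q) t x - b (u t x) * Dt q t x - c (u t x) * Dx q t x
    + deriv m (u t x) * q t x

theorem Smooth2.hasDerivAt_fderiv_fst {u : ℝ → ℝ → ℝ} (hu : Smooth2 u) (t x : ℝ) :
    HasDerivAt (fun s => u s x) (fderiv ℝ (fun p : ℝ × ℝ => u p.1 p.2) (t, x) (1, 0)) t := by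
  have h := (hu.differentiable (by simp) (t, x)).hasFDerivAt
  exact h.comp_hasDerivAt t ((hasDerivAt_id t).prodMk (hasDerivAt_const t x))

theorem Smooth2.hasDerivAt_fderiv_snd {u : ℝ → ℝ → ℝ} (hu : Smooth2 u) (t x : ℝ) :
    HasDerivAt (fun s => u t s) (fderiv ℝ (fun p : ℝ × ℝ => u p.1 p.2) (t, x) (0, 1)) x := by
  have h := (hu.differentiable (by simp) (t, x)).hasFDerivAt
  exact h.comp_hasDerivAt x ((hasDerivAt_const x t).prodMk (hasDerivAt_id x))

theorem Smooth2.hasDerivAt_Dt {u : ℝ → ℝ → ℝ} (hu : Smooth2 u) (t x : ℝ) :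
    HasDerivAt (fun s => u s x) (Dt u t x) t := by
  have h := hu.hasDerivAt_fderiv_fst t x
  rwa [← h.deriv] at h

theorem Smooth2.hasDerivAt_Dx {u : ℝ → ℝ → ℝ} (hu : Smooth2 u) (t x : ℝ) :
    HasDerivAt (fun s => u t s) (Dx u t x) x := by
  have h := hu.hasDerivAt_fderiv_snd t x
  rwa [← h.deriv] at h

theorem Smooth2.Dt_smooth2 {u : ℝ → ℝ → ℝ} (hu : Smooth2 u) : Smooth2 (Dt u) := by
  have h : (fun p : ℝ × ℝ => Dt u p.1 p.2)
      = fun p => fderiv ℝ (fun p : ℝ × ℝ => u p.1 p.2) p (1, 0) :=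
    funext fun p => (hu.hasDerivAt_fderiv_fst p.1 p.2).deriv
  rw [Smooth2, h]
  exact (hu.fderiv_right (by exact_mod_cast le_top)).clm_apply contDiff_const

theorem Smooth2.Dx_smooth2 {u : ℝ → ℝ → ℝ} (hu : Smooth2 u) : Smooth2 (Dx u) := by
  have h : (fun p : ℝ × ℝ => Dx u p.1 p.2)
      = fun p => fderiv ℝ (fun p : ℝ × ℝ => u p.1 p.2) p (0, 1) :=
    funext fun p => (hu.hasDerivAt_fderiv_snd p.1 p.2).deriv
  rw [Smooth2, h]
  exact (hu.fderiv_right (by exact_mod_cast le_top)).clm_apply contDiff_const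

def timeFlux (γ ε : ℝ) (B q : ℝ → ℝ) (u : ℝ → ℝ → ℝ) : ℝ → ℝ → ℝ := fun t x =>
  exp (γ * x) * (q (x - ε * t) * (Dt u t x + B (u t x)) + ε * deriv q (x - ε * t) * u t x)

def spaceFlux (γ ε : ℝ) (B q : ℝ → ℝ) (u : ℝ → ℝ → ℝ) : ℝ → ℝ → ℝ := fun t x =>
  exp (γ * x) * ((deriv q (x - ε * t) - γ * q (x - ε * t)) * u t x
    - q (x - ε * t) * (Dx u t x - ε * B (u t x)))

section Fluxes

variable {γ ε : ℝ} {b B q : ℝ → ℝ} {u : ℝ → ℝ → ℝ}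

theorem Dt_timeFlux (hB : ∀ y, HasDerivAt B (b y) y) (hq : Differentiable ℝ q)
    (hq' : Differentiable ℝ (deriv q)) (hu : Smooth2 u) (t x : ℝ) :
    Dt (timeFlux γ ε B q u) t x = exp (γ * x) *
      (-ε * deriv q (x - ε * t) * (Dt u t x + B (u t x))
        + q (x - ε * t) * (Dt (Dt u) t x + b (u t x) * Dt u t x)
        - ε ^ 2 * deriv (deriv q) (x - ε * t) * u t x
        + ε * deriv q (x - ε * t) * Dt u t x) := by
  have harg : HasDerivAt (fun s : ℝ => x - ε * s) (-ε) t := by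
    simpa using ((hasDerivAt_id t).const_mul ε).const_sub x
  have hQ := (hq (x - ε * t)).hasDerivAt.comp t harg
  have hQ' := (hq' (x - ε * t)).hasDerivAt.comp t harg
  have hU := hu.hasDerivAt_Dt t x
  have hUt := hu.Dt_smooth2.hasDerivAt_Dt t x
  have hBU := (hB (u t x)).comp t hU
  refine ((((hQ.mul (hUt.add hBU)).add ((hQ'.const_mul ε).mul hU)).const_mul
    (exp (γ * x))).deriv).trans ?_
  simp only [Function.comp_apply, Pi.add_apply]
  ring

theorem Dx_spaceFlux (hB : ∀ y, HasDerivAt B (b y) y) (hq : Differentiable ℝ q)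
    (hq' : Differentiable ℝ (deriv q)) (hu : Smooth2 u) (t x : ℝ) :
    Dx (spaceFlux γ ε B q u) t x = exp (γ * x) *
      (γ * ((deriv q (x - ε * t) - γ * q (x - ε * t)) * u t x
          - q (x - ε * t) * (Dx u t x - ε * B (u t x)))
        + (deriv (deriv q) (x - ε * t) - γ * deriv q (x - ε * t)) * u t x
        + (deriv q (x - ε * t) - γ * q (x - ε * t)) * Dx u t x
        - deriv q (x - ε * t) * (Dx u t x - ε * B (u t x))
        - q (x - ε * t) * (Dx (Dx u) t x - ε * b (u t x) * Dx u t x)) := by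
  have hQ := (hq (x - ε * t)).hasDerivAt.comp_sub_const x (ε * t)
  have hQ' := (hq' (x - ε * t)).hasDerivAt.comp_sub_const x (ε * t)
  have hU := hu.hasDerivAt_Dx t x
  have hUx := hu.Dx_smooth2.hasDerivAt_Dx t x
  have hBU := (hB (u t x)).comp x hU
  have hE : HasDerivAt (fun y => exp (γ * y)) (exp (γ * x) * γ) x := by
    simpa using ((hasDerivAt_id x).const_mul γ).exp
  refine ((hE.mul (((hQ'.sub (hQ.const_mul γ)).mul hU).sub
    (hQ.mul (hUx.sub (hBU.const_mul ε))))).deriv).trans ?_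
  simp only [Function.comp_apply, Pi.sub_apply, Pi.mul_apply]
  ring

end Fluxes

theorem hasDerivAt_potential {m : ℝ → ℝ} (hm : Differentiable ℝ m) (γ ε y : ℝ) :
    HasDerivAt (fun z => ε * (γ * z + m z / γ)) (ε * (γ + deriv m y / γ)) y := by
  simpa using (((hasDerivAt_id y).const_mul γ).add ((hm y).hasDerivAt.div_const γ)).const_mul ε

theorem multiplier_identity {m b c B q : ℝ → ℝ} {γ ε : ℝ} (hγ : γ ≠ 0) (hε : ε ^ 2 = 1)
    (hm : Differentiable ℝ m) (hbdef : ∀ y, b y = ε * (γ + deriv m y / γ))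
    (hcdef : ∀ y, c y = -γ + deriv m y / γ) (hB : ∀ y, B y = ε * (γ * y + m y / γ))
    (hq : Differentiable ℝ q) (hq' : Differentiable ℝ (deriv q))
    {u : ℝ → ℝ → ℝ} (hu : Smooth2 u) (t x : ℝ) :
    exp (γ * x) * q (x - ε * t) * Fop b c m u t x =
      Dt (timeFlux γ ε B q u) t x + Dx (spaceFlux γ ε B q u) t x := by
  have hBb : ∀ y, HasDerivAt B (b y) y := fun y => by
    rw [funext hB, hbdef]; exact hasDerivAt_potential hm γ ε y
  rw [Dt_timeFlux hBb hq hq' hu, Dx_spaceFlux hBb hq hq' hu]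
  simp only [Fop, hbdef, hcdef, hB]
  field_simp
  linear_combination (γ * u t x * deriv (deriv q) (x - ε * t) - q (x - ε * t) *
    (γ * m (u t x) + (γ ^ 2 + deriv m (u t x)) * Dx u t x + γ ^ 3 * u t x)) * hε

/-- exp(γx)·q(x − εt) is a conservation law multiplier of the semilinear wave
equation with b = ε(γ + m′/γ), c = −γ + m′/γ. -/
theorem stmt_8
    (m : ℝ → ℝ) (hm : ContDiff ℝ (⊤ : ℕ∞) m) (hm0 : m 0 = 0)
    (γ ε : ℝ) (hγ : γ ≠ 0) (hε : ε = 1 ∨ ε = -1)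
    (b c : ℝ → ℝ)
    (hbdef : ∀ y, b y = ε * (γ + deriv m y / γ))
    (hcdef : ∀ y, c y = -γ + deriv m y / γ)
    (B : ℝ → ℝ) (hB : ∀ y, B y = ∫ s in (0:ℝ)..y, b s)
    (q : ℝ → ℝ) (hq : ContDiff ℝ (⊤ : ℕ∞) q)
    (u : ℝ → ℝ → ℝ) (hu : Smooth2 u) :
    (∀ y, B y = ε * (γ * y + m y / γ))
    ∧ (∀ t x : ℝ,
      Real.exp (γ * x) * q (x - ε * t) * Fop b c m u t x =
        Dt (fun t x => Real.exp (γ * x) *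
          (q (x - ε * t) * (Dt u t x + B (u t x)) + ε * deriv q (x - ε * t) * u t x)) t x
        + Dx (fun t x => Real.exp (γ * x) *
          ((deriv q (x - ε * t) - γ * q (x - ε * t)) * u t x
            - q (x - ε * t) * (Dx u t x - ε * B (u t x)))) t x)
    ∧ ((∀ t x, Fop b c m u t x = 0) →
      ∀ t x : ℝ,
        Dt (fun t x => Real.exp (γ * x) *
          (q (x - ε * t) * (Dt u t x + B (u t x)) + ε * deriv q (x - ε * t) * u t x)) t x
        + Dx (fun t x => Real.exp (γ * x) *
          ((deriv q (x - ε * t) - γ * q (x - ε * t)) * u t x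
            - q (x - ε * t) * (Dx u t x - ε * B (u t x)))) t x = 0) := by
  have hmd : Differentiable ℝ m := hm.differentiable (by simp)
  have hqd : Differentiable ℝ q := hq.differentiable (by simp)
  have hq'd : Differentiable ℝ (deriv q) :=
    (contDiff_infty_iff_deriv.mp hq).2.differentiable (by simp)
  have hb : Continuous b := by
    rw [funext hbdef]
    exact continuous_const.mul (continuous_const.add ((hm.continuous_deriv (by simp)).div_const γ))
  have hBm : ∀ y, B y = ε * (γ * y + m y / γ) := fun y => by
    rw [hB, intervalIntegral.integral_eq_sub_of_hasDerivAt
      (fun s _ => hbdef s ▸ hasDerivAt_potential hmd γ ε s) (hb.intervalIntegrable 0 y)]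
    simp [hm0]
  have hid := multiplier_identity hγ (by rcases hε with rfl | rfl <;> norm_num) hmd hbdef hcdef
    hBm hqd hq'd hu
  refine ⟨hBm, hid, fun hF t x => ?_⟩
  exact (hid t x).symm.trans (by rw [hF, mul_zero])
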